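/- There exists a constant C > 0 (depending only on q) such that for every Calderón–Zygmund set R̃ in the weighted homogeneous tree, the dilated set R̃* = {x ∈ V : d(x, R̃) < h(R̃)/4} satisfies μ(R̃*) ≤ C μ(R̃). -/

import Mathlib

open scoped ENNReal NNReal
open MeasureTheory Filter

/-- An infinite homogeneous tree of order `q+1`: a connected acyclic graph in which
every vertex has exactly `q+1` neighbours, equipped with a doubly-infinite geodesic
`geo : ℤ → V` (the labelling `N` is the inverse of `geo`) and the associated level
function `lev`, satisfying `lev (geo i) = i`, changing by `±1` along edges, and such
that every vertex has exactly one neighbour lying directly above it. -/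
structure HomTree (q : ℕ) where
  V : Type
  G : SimpleGraph V
  conn : G.Connected
  acyclic : G.IsAcyclic
  degree : ∀ v : V, (G.neighborSet v).ncard = q + 1
  lev : V → ℤ
  geo : ℤ → V
  geo_dist : ∀ i j : ℤ, G.dist (geo i) (geo j) = (i - j).natAbs
  lev_geo : ∀ i : ℤ, lev (geo i) = i
  lev_adj : ∀ v w : V, G.Adj v w → lev w = lev v + 1 ∨ lev w = lev v - 1
  unique_above : ∀ v : V, ∃! w : V, G.Adj v w ∧ lev w = lev v + 1

namespace HomTree

variable {q : ℕ}

/-- Graph distance on the tree. -/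
noncomputable def dist (T : HomTree q) (x y : T.V) : ℕ := T.G.dist x y

/-- `x` lies below `y`. -/
def below (T : HomTree q) (x y : T.V) : Prop := T.lev x = T.lev y - T.dist x y

/-- The weighted measure `μ(A) = ∑_{x ∈ A} q^{ℓ(x)}`. -/
noncomputable def mu (T : HomTree q) (A : Set T.V) : ℝ≥0∞ :=
  ∑' x : A, (q : ℝ≥0∞) ^ (T.lev x.1)

def sphere (T : HomTree q) (x₀ : T.V) (r : ℕ) : Set T.V := {x | T.dist x x₀ = r}

def ball (T : HomTree q) (x₀ : T.V) (r : ℕ) : Set T.V := {x | T.dist x x₀ ≤ r}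

/-- An admissible trapezoid: either a degenerate singleton `{root}` (with height 1), or
the set of vertices below the root spanning levels `[h, 2h)` under it. -/
structure Trapezoid (T : HomTree q) where
  root : T.V
  height : ℕ
  degenerate : Bool
  height_pos : 1 ≤ height
  deg_height : degenerate = true → height = 1

namespace Trapezoid

variable {T : HomTree q}

/-- The vertex set of the admissible trapezoid. -/
def set (R : T.Trapezoid) : Set T.V :=
  if R.degenerate then {R.root}
  else {x | T.below x R.root ∧ (R.height : ℤ) ≤ T.lev R.root - T.lev x ∧
        T.lev R.root - T.lev x < 2 * (R.height : ℤ)}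

/-- The envelope (Calderón–Zygmund set) of the admissible trapezoid:
vertices below the root with `h/2 ≤ ℓ(x_R) - ℓ(x) < 4h`. -/
def envelope (R : T.Trapezoid) : Set T.V :=
  if R.degenerate then {R.root}
  else {x | T.below x R.root ∧ (R.height : ℤ) ≤ 2 * (T.lev R.root - T.lev x) ∧
        T.lev R.root - T.lev x < 4 * (R.height : ℤ)}

/-- The width `w(R) = q^{ℓ(x_R)}`. -/
noncomputable def width (R : T.Trapezoid) : ℝ≥0∞ := (q : ℝ≥0∞) ^ (T.lev R.root)

/-- The dilated set `R̃* = {x : d(x, R̃) < h(R̃)/4}`. -/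
def dilate (R : T.Trapezoid) : Set T.V :=
  {x | ∃ y ∈ R.envelope, 4 * T.dist x y < R.height}

end Trapezoid

/-- `‖f‖_{L^p(μ)}^p = ∑_x |f(x)|^p q^{ℓ(x)}`. -/
noncomputable def lpPow (T : HomTree q) (f : T.V → ℂ) (p : ℝ) : ℝ≥0∞ :=
  ∑' x : T.V, (‖f x‖₊ : ℝ≥0∞) ^ p * (q : ℝ≥0∞) ^ (T.lev x)

/-- `∫_A |f|^p dμ`. -/
noncomputable def setIntPow (T : HomTree q) (f : T.V → ℂ) (p : ℝ) (A : Set T.V) : ℝ≥0∞ :=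
  ∑' x : A, (‖f x.1‖₊ : ℝ≥0∞) ^ p * (q : ℝ≥0∞) ^ (T.lev x.1)

/-- `‖f‖_{L¹(μ)}`. -/
noncomputable def l1Norm (T : HomTree q) (f : T.V → ℂ) : ℝ≥0∞ :=
  ∑' x : T.V, (‖f x‖₊ : ℝ≥0∞) * (q : ℝ≥0∞) ^ (T.lev x)

/-- `‖f‖_{L²(μ)}`. -/
noncomputable def l2Norm (T : HomTree q) (f : T.V → ℂ) : ℝ≥0∞ :=
  (T.lpPow f 2) ^ (2⁻¹ : ℝ)

/-- `‖f‖_{L^{p}(μ)}` for `p ∈ ℝ≥0∞`, including `p = ∞`. -/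
noncomputable def lpNormE (T : HomTree q) (p : ℝ≥0∞) (f : T.V → ℂ) : ℝ≥0∞ :=
  if p = ⊤ then ⨆ x, (‖f x‖₊ : ℝ≥0∞) else (T.lpPow f p.toReal) ^ (p.toReal)⁻¹

/-- The trapezoidal maximal function of a nonnegative density `g`. -/
noncomputable def maxFn (T : HomTree q) (g : T.V → ℝ≥0∞) (x : T.V) : ℝ≥0∞ :=
  ⨆ (R : T.Trapezoid) (_ : x ∈ R.set),
    (∑' y : R.set, g y.1 * (q : ℝ≥0∞) ^ (T.lev y.1)) / T.mu R.set

/-- `a` is a `(1,∞)`-atom associated with the Calderón–Zygmund set `R̃`. -/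
def IsInftyAtomOn (T : HomTree q) (R : T.Trapezoid) (a : T.V → ℂ) : Prop :=
  Function.support a ⊆ R.envelope ∧
  (∀ x, (‖a x‖₊ : ℝ≥0∞) ≤ (T.mu R.envelope)⁻¹) ∧
  ∑' x : T.V, a x * (q : ℂ) ^ (T.lev x) = 0

/-- `a` is a `(1,∞)`-atom. -/
def IsInftyAtom (T : HomTree q) (a : T.V → ℂ) : Prop :=
  ∃ R : T.Trapezoid, T.IsInftyAtomOn R a

/-- `a` is a `(1,p)`-atom, `1 < p < ∞`: supported in a Calderón–Zygmund set `R̃`,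
`‖a‖_{L^p} ≤ μ(R̃)^{1/p-1}` (equivalently `‖a‖_{L^p}^p ≤ μ(R̃)^{1-p}`), vanishing integral. -/
def IspAtom (T : HomTree q) (p : ℝ) (a : T.V → ℂ) : Prop :=
  ∃ R : T.Trapezoid, Function.support a ⊆ R.envelope ∧
    T.lpPow a p ≤ (T.mu R.envelope) ^ (1 - p) ∧
    ∑' x : T.V, a x * (q : ℂ) ^ (T.lev x) = 0

/-- `h` belongs to the atomic Hardy space `H^{1,∞}(μ)`. -/
def InH1 (T : HomTree q) (h : T.V → ℂ) : Prop :=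
  ∃ (c : ℕ → ℂ) (a : ℕ → T.V → ℂ), (∀ n, T.IsInftyAtom (a n)) ∧
    Summable (fun n => ‖c n‖) ∧ ∀ x, HasSum (fun n => c n * a n x) (h x)

/-- The `H^{1,∞}(μ)` norm: infimum of `∑ |λ_j|` over atomic decompositions. -/
noncomputable def H1Norm (T : HomTree q) (h : T.V → ℂ) : ℝ≥0∞ :=
  ⨅ (c : ℕ → ℂ) (a : ℕ → T.V → ℂ)
    (_ : (∀ n, T.IsInftyAtom (a n)) ∧ ∀ x, HasSum (fun n => c n * a n x) (h x)),
    ∑' n, (‖c n‖₊ : ℝ≥0∞)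

/-- `h` belongs to the atomic Hardy space `H^{1,p}(μ)`. -/
def InH1p (T : HomTree q) (p : ℝ) (h : T.V → ℂ) : Prop :=
  ∃ (c : ℕ → ℂ) (a : ℕ → T.V → ℂ), (∀ n, T.IspAtom p (a n)) ∧
    Summable (fun n => ‖c n‖) ∧ ∀ x, HasSum (fun n => c n * a n x) (h x)

/-- The `H^{1,p}(μ)` norm. -/
noncomputable def H1pNorm (T : HomTree q) (p : ℝ) (h : T.V → ℂ) : ℝ≥0∞ :=
  ⨅ (c : ℕ → ℂ) (a : ℕ → T.V → ℂ)
    (_ : (∀ n, T.IspAtom p (a n)) ∧ ∀ x, HasSum (fun n => c n * a n x) (h x)),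
    ∑' n, (‖c n‖₊ : ℝ≥0∞)

/-- The K-functional for the couple `(H¹(μ), L^{p₁}(μ))`. -/
noncomputable def KH1Lp (T : HomTree q) (p₁ : ℝ≥0∞) (t : ℝ≥0∞) (f : T.V → ℂ) : ℝ≥0∞ :=
  ⨅ (b : T.V → ℂ) (g : T.V → ℂ) (_ : ∀ x, f x = b x + g x),
    T.H1Norm b + t * T.lpNormE p₁ g

/-- The real interpolation norm `‖f‖_{θ,pr}` for the couple `(H¹(μ), L^{p₁}(μ))`. -/
noncomputable def interpNorm (T : HomTree q) (p₁ : ℝ≥0∞) (θ pr : ℝ) (f : T.V → ℂ) : ℝ≥0∞ :=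
  (∫⁻ t in Set.Ioi (0 : ℝ),
      (T.KH1Lp p₁ (ENNReal.ofReal t) f / (ENNReal.ofReal t) ^ θ) ^ pr *
        (ENNReal.ofReal t)⁻¹) ^ (1 / pr)

/-- The distinguished Laplacian `ℒ`. -/
noncomputable def lap (T : HomTree q) (f : T.V → ℂ) (x : T.V) : ℂ :=
  f x - (1 / (2 * ((Real.sqrt q : ℝ) : ℂ))) *
    ∑' y : T.G.neighborSet x, ((Real.sqrt q : ℝ) : ℂ) ^ (T.lev y.1 - T.lev x) * f y.1

end HomTree

open HomTree

section AuxCZ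

namespace HomTree

variable {q : ℕ}

private lemma lev_le_length {T : HomTree q} : ∀ {x y : T.V} (p : T.G.Walk x y),
    T.lev y - T.lev x ≤ p.length := by
  intro x y p
  induction p with
  | nil => simp
  | @cons u v w h p ih =>
      have := T.lev_adj u v h
      have hl : (SimpleGraph.Walk.cons h p).length = p.length + 1 := by
        simp [SimpleGraph.Walk.length_cons]
      rw [hl]
      push_cast
      omega

private lemma lev_sub_le_dist (T : HomTree q) (x y : T.V) :
    T.lev y - T.lev x ≤ (T.dist x y : ℤ) := by
  obtain ⟨p, hp⟩ := T.conn.exists_walk_length_eq_dist x y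
  have := lev_le_length p
  rw [hp] at this
  exact this

private lemma dist_eq_zero_iff' (T : HomTree q) {x y : T.V} : T.dist x y = 0 ↔ x = y :=
  T.conn.dist_eq_zero_iff

private lemma dist_self' (T : HomTree q) (x : T.V) : T.dist x x = 0 :=
  SimpleGraph.dist_self

private lemma exists_first_step (T : HomTree q) {x y : T.V} (h : x ≠ y) :
    ∃ u, T.G.Adj x u ∧ T.dist u y + 1 = T.dist x y := by
  have hd : T.G.dist x y ≠ 0 := fun h0 => h (T.conn.dist_eq_zero_iff.mp h0)
  obtain ⟨p, hp⟩ := SimpleGraph.exists_walk_of_dist_ne_zero hd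
  cases p with
  | nil => exact absurd rfl h
  | @cons _ u _ hadj p' =>
      refine ⟨u, hadj, ?_⟩
      have h1 : T.G.dist u y ≤ p'.length := SimpleGraph.dist_le p'
      have h2 : T.G.dist x y ≤ T.G.dist x u + T.G.dist u y := T.conn.dist_triangle
      have h3 : T.G.dist x u = 1 := SimpleGraph.dist_eq_one_iff_adj.mpr hadj
      have h4 : p'.length + 1 = T.G.dist x y := by
        simpa [SimpleGraph.Walk.length_cons] using hp
      show T.G.dist u y + 1 = T.G.dist x y
      omega

private lemma adj_below {T : HomTree q} {r z u : T.V} (ha : T.G.Adj z u) (hb : T.below z r)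
    (h1 : 1 ≤ T.lev r - T.lev z) : T.below u r := by
  have hbz : T.lev z = T.lev r - (T.dist z r : ℤ) := hb
  rcases T.lev_adj z u ha with hu | hu
  · -- u is above z, hence the parent, which lies on the geodesic to r
    have hzr : z ≠ r := by
      intro he
      subst he
      rw [T.dist_self' z] at hbz
      omega
    obtain ⟨v, hv, hvd⟩ := T.exists_first_step hzr
    have h2 : T.lev r - T.lev v ≤ (T.dist v r : ℤ) := T.lev_sub_le_dist v r
    have hlev_v : T.lev v = T.lev z + 1 := by
      rcases T.lev_adj z v hv with h | h
      · exact h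
      · omega
    obtain ⟨w, hw, huniq⟩ := T.unique_above z
    have h3 : u = w := huniq u ⟨ha, hu⟩
    have h4 : v = w := huniq v ⟨hv, hlev_v⟩
    subst h3
    subst h4
    show T.lev v = T.lev r - (T.dist v r : ℤ)
    omega
  · -- u is a child of z
    have hd1 : T.dist u r ≤ T.dist u z + T.dist z r := T.conn.dist_triangle
    have hd3 : T.dist u z = 1 := SimpleGraph.dist_eq_one_iff_adj.mpr ha.symm
    have hd2 : T.lev r - T.lev u ≤ (T.dist u r : ℤ) := T.lev_sub_le_dist u r
    show T.lev u = T.lev r - (T.dist u r : ℤ)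
    omega

private lemma below_of_dist_lt {T : HomTree q} {r : T.V} :
    ∀ (n : ℕ) (z w : T.V), T.below z r → (n : ℤ) < T.lev r - T.lev z → T.dist z w ≤ n →
      T.below w r := by
  intro n
  induction n with
  | zero =>
      intro z w hb _ hd
      have : z = w := (T.dist_eq_zero_iff').mp (Nat.le_zero.mp hd)
      subst this
      exact hb
  | succ n ih =>
      intro z w hb hlt hd
      by_cases hzw : z = w
      · subst hzw; exact hb
      · obtain ⟨u, hu, hud⟩ := T.exists_first_step hzw
        have hbu : T.below u r := adj_below hu hb (by push_cast at hlt ⊢; omega)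
        have hlev : T.lev u = T.lev z + 1 ∨ T.lev u = T.lev z - 1 := T.lev_adj z u hu
        refine ih u w hbu ?_ (by omega)
        push_cast at hlt ⊢
        omega

/-- Children of a vertex. -/
private def chld (T : HomTree q) (v : T.V) : Set T.V :=
  {w | T.G.Adj v w ∧ T.lev w = T.lev v - 1}

/-- Slice of vertices below `r` at depth `k`. -/
private def slc (T : HomTree q) (r : T.V) (k : ℕ) : Set T.V :=
  {x | T.below x r ∧ T.dist x r = k}

private lemma parent_unique {T : HomTree q} {x v w : T.V} (hv : T.G.Adj v x) (hw : T.G.Adj w x)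
    (hv' : T.lev x = T.lev v - 1) (hw' : T.lev x = T.lev w - 1) : v = w := by
  obtain ⟨p, _, hu⟩ := T.unique_above x
  rw [hu v ⟨hv.symm, by omega⟩, hu w ⟨hw.symm, by omega⟩]

private lemma chld_finite_ncard (T : HomTree q) (hq : 2 ≤ q) (v : T.V) :
    (T.chld v).Finite ∧ (T.chld v).ncard = q := by
  have hnb : (T.G.neighborSet v).ncard = q + 1 := T.degree v
  have hfin : (T.G.neighborSet v).Finite := by
    by_contra h
    have h' : (T.G.neighborSet v).Infinite := h
    rw [h'.ncard] at hnb
    omega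
  obtain ⟨p, hp, hu⟩ := T.unique_above v
  have hsplit : T.G.neighborSet v = {p} ∪ T.chld v := by
    ext w
    simp only [SimpleGraph.mem_neighborSet, Set.mem_union, Set.mem_singleton_iff, chld,
      Set.mem_setOf_eq]
    constructor
    · intro hw
      rcases T.lev_adj v w hw with h | h
      · exact Or.inl (hu w ⟨hw, h⟩)
      · exact Or.inr ⟨hw, h⟩
    · rintro (rfl | ⟨hw, _⟩)
      · exact hp.1
      · exact hw
  have hcf : (T.chld v).Finite := by
    apply hfin.subset
    rw [hsplit]
    exact Set.subset_union_right
  refine ⟨hcf, ?_⟩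
  have hdisj : Disjoint ({p} : Set T.V) (T.chld v) := by
    rw [Set.disjoint_singleton_left]
    intro hpc
    have h1 : T.lev p = T.lev v + 1 := hp.2
    have h2 : T.lev p = T.lev v - 1 := hpc.2
    omega
  rw [hsplit, Set.ncard_union_eq hdisj (Set.finite_singleton p) hcf,
    Set.ncard_singleton] at hnb
  omega

private lemma mu_finset (T : HomTree q) (t : Finset T.V) :
    T.mu ↑t = ∑ x ∈ t, (q : ℝ≥0∞) ^ (T.lev x) :=
  Finset.tsum_subtype t fun x => (q : ℝ≥0∞) ^ (T.lev x)

private lemma mu_finite (T : HomTree q) {s : Set T.V} (hs : s.Finite) :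
    T.mu s = ∑ x ∈ hs.toFinset, (q : ℝ≥0∞) ^ (T.lev x) := by
  rw [← T.mu_finset hs.toFinset, hs.coe_toFinset]

private lemma mu_eq_indicator (T : HomTree q) (A : Set T.V) :
    T.mu A = ∑' x, A.indicator (fun z => (q : ℝ≥0∞) ^ (T.lev z)) x :=
  tsum_subtype A (fun z => (q : ℝ≥0∞) ^ (T.lev z))

private lemma mu_mono (T : HomTree q) {A B : Set T.V} (h : A ⊆ B) : T.mu A ≤ T.mu B := by
  rw [T.mu_eq_indicator A, T.mu_eq_indicator B]
  exact ENNReal.tsum_le_tsum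
    (Set.indicator_le_indicator_of_subset h (fun _ => zero_le))

private lemma mu_biUnion (T : HomTree q) {ι : Type*} (s : Finset ι) (A : ι → Set T.V)
    (hd : (↑s : Set ι).PairwiseDisjoint A) :
    T.mu (⋃ i ∈ s, A i) = ∑ i ∈ s, T.mu (A i) := by
  letI : MeasurableSpace T.V := ⊤
  haveI : MeasurableSingletonClass T.V := ⟨fun _ => trivial⟩
  have key : ∀ B : Set T.V,
      T.mu B = (MeasureTheory.Measure.count.withDensity
        (fun x => (q : ℝ≥0∞) ^ (T.lev x))) B := by
    intro B
    rw [MeasureTheory.withDensity_apply _ (MeasurableSpace.measurableSet_top),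
      ← MeasureTheory.lintegral_indicator (MeasurableSpace.measurableSet_top) _,
      MeasureTheory.lintegral_count]
    exact T.mu_eq_indicator B
  rw [key]
  rw [MeasureTheory.measure_biUnion_finset hd (fun b _ => MeasurableSpace.measurableSet_top)]
  exact Finset.sum_congr rfl fun i _ => (key (A i)).symm

private lemma chld_mu (T : HomTree q) (hq : 2 ≤ q) (v : T.V) :
    T.mu (T.chld v) = (q : ℝ≥0∞) ^ (T.lev v) := by
  obtain ⟨hfin, hcard⟩ := T.chld_finite_ncard hq v
  have hq0 : (q : ℝ≥0∞) ≠ 0 := by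
    simp only [ne_eq, Nat.cast_eq_zero]
    omega
  have hqt : (q : ℝ≥0∞) ≠ ⊤ := ENNReal.natCast_ne_top q
  rw [T.mu_finite hfin]
  have hconst : ∀ x ∈ hfin.toFinset, (q : ℝ≥0∞) ^ (T.lev x) = (q : ℝ≥0∞) ^ (T.lev v - 1) := by
    intro x hx
    rw [Set.Finite.mem_toFinset] at hx
    rw [hx.2]
  rw [Finset.sum_congr rfl hconst, Finset.sum_const]
  have hcard' : hfin.toFinset.card = q := by
    rw [← Set.ncard_eq_toFinset_card (T.chld v) hfin]
    exact hcard
  rw [hcard', nsmul_eq_mul]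
  calc (q : ℝ≥0∞) * (q : ℝ≥0∞) ^ (T.lev v - 1)
      = (q : ℝ≥0∞) ^ (1 : ℤ) * (q : ℝ≥0∞) ^ (T.lev v - 1) := by rw [zpow_one]
    _ = (q : ℝ≥0∞) ^ (1 + (T.lev v - 1)) := (ENNReal.zpow_add hq0 hqt _ _).symm
    _ = (q : ℝ≥0∞) ^ (T.lev v) := congrArg (fun t => (q : ℝ≥0∞) ^ t) (by omega)

private lemma slc_succ (T : HomTree q) (r : T.V) (k : ℕ) :
    T.slc r (k + 1) = ⋃ v ∈ T.slc r k, T.chld v := by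
  ext x
  simp only [slc, Set.mem_setOf_eq, Set.mem_iUnion, exists_prop]
  constructor
  · rintro ⟨hb, hd⟩
    have hxr : x ≠ r := by
      intro he
      subst he
      rw [T.dist_self' x] at hd
      omega
    obtain ⟨v, hv, hvd⟩ := T.exists_first_step hxr
    have hdxr : T.lev x = T.lev r - (T.dist x r : ℤ) := hb
    have h2 : T.lev r - T.lev v ≤ (T.dist v r : ℤ) := T.lev_sub_le_dist v r
    have hlev_v : T.lev v = T.lev x + 1 := by
      rcases T.lev_adj x v hv with h | h
      · exact h
      · push_cast at *; omega
    have hbv : T.below v r := by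
      show T.lev v = T.lev r - (T.dist v r : ℤ)
      push_cast at *; omega
    refine ⟨v, ⟨hbv, by omega⟩, hv.symm, by omega⟩
  · rintro ⟨v, ⟨hbv, hdv⟩, hav, hlv⟩
    have hbvr : T.lev v = T.lev r - (T.dist v r : ℤ) := hbv
    have h1 : T.G.dist x r ≤ T.G.dist x v + T.G.dist v r := T.conn.dist_triangle
    have h2 : T.G.dist x v = 1 := SimpleGraph.dist_eq_one_iff_adj.mpr hav.symm
    have h3 : T.lev r - T.lev x ≤ (T.dist x r : ℤ) := T.lev_sub_le_dist x r
    have h4 : T.dist x r ≤ T.dist x v + T.dist v r := h1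
    have hd : T.dist x r = k + 1 := by
      have h2' : T.dist x v = 1 := h2
      push_cast at *
      omega
    exact ⟨by show T.lev x = T.lev r - (T.dist x r : ℤ); rw [hd]; push_cast at *; omega, hd⟩

private lemma slc_zero (T : HomTree q) (r : T.V) : T.slc r 0 = {r} := by
  ext x
  simp only [slc, Set.mem_setOf_eq, Set.mem_singleton_iff]
  constructor
  · rintro ⟨_, hd⟩
    exact (T.dist_eq_zero_iff').mp hd
  · rintro rfl
    refine ⟨?_, T.dist_self' x⟩
    show T.lev x = T.lev x - (T.dist x x : ℤ)
    rw [T.dist_self' x]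
    simp

private lemma chld_pairwise_disjoint (T : HomTree q) (s : Set T.V) :
    s.PairwiseDisjoint T.chld := by
  intro v _ w _ hvw
  rw [Function.onFun, Set.disjoint_left]
  intro x hxv hxw
  exact hvw (T.parent_unique hxv.1 hxw.1 hxv.2 hxw.2)

private lemma slc_finite_mu (T : HomTree q) (hq : 2 ≤ q) (r : T.V) :
    ∀ k, (T.slc r k).Finite ∧ T.mu (T.slc r k) = (q : ℝ≥0∞) ^ (T.lev r) := by
  intro k
  induction k with
  | zero =>
      rw [T.slc_zero r]
      refine ⟨Set.finite_singleton r, ?_⟩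
      have : T.mu {r} = ∑' x : ({r} : Set T.V), (q : ℝ≥0∞) ^ (T.lev x.1) := rfl
      rw [this, tsum_singleton r (fun x => (q : ℝ≥0∞) ^ (T.lev x))]
  | succ k ih =>
      obtain ⟨hfin, hmu⟩ := ih
      have hun : T.slc r (k + 1) = ⋃ v ∈ hfin.toFinset, T.chld v := by
        rw [T.slc_succ r k]
        ext x
        simp [Set.Finite.mem_toFinset]
      constructor
      · rw [hun]
        exact Set.Finite.biUnion (hfin.toFinset.finite_toSet) (fun v _ => (T.chld_finite_ncard hq v).1)
      · rw [hun, T.mu_biUnion hfin.toFinset T.chld (T.chld_pairwise_disjoint _)]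
        have : ∀ v ∈ hfin.toFinset, T.mu (T.chld v) = (q : ℝ≥0∞) ^ (T.lev v) :=
          fun v _ => T.chld_mu hq v
        rw [Finset.sum_congr rfl this, ← T.mu_finite hfin, hmu]

private lemma slc_disjoint (T : HomTree q) (r : T.V) :
    (Set.univ : Set ℕ).PairwiseDisjoint (T.slc r) := by
  intro k _ k' _ hkk'
  rw [Function.onFun, Set.disjoint_left]
  intro x hx hx'
  exact hkk' (hx.2 ▸ hx'.2 ▸ rfl)

private lemma mu_slc_union (T : HomTree q) (hq : 2 ≤ q) (r : T.V) (K : Finset ℕ) :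
    T.mu (⋃ k ∈ K, T.slc r k) = K.card * (q : ℝ≥0∞) ^ (T.lev r) := by
  rw [T.mu_biUnion K (T.slc r) ((T.slc_disjoint r).subset (Set.subset_univ _))]
  rw [Finset.sum_congr rfl (fun k _ => (T.slc_finite_mu hq r k).2), Finset.sum_const,
    nsmul_eq_mul]

end HomTree

end AuxCZ


/-- there is a constant `C > 0`, depending only on `q`, such that every
Calderón–Zygmund set `R̃` satisfies `μ(R̃*) ≤ C μ(R̃)`, where
`R̃* = {x : d(x,R̃) < h(R̃)/4}`. -/
theorem dilate_measure_le {q : ℕ} (hq : 2 ≤ q) :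
    ∃ C : ℝ≥0, 0 < C ∧ ∀ (T : HomTree q) (R : T.Trapezoid),
      T.mu R.dilate ≤ (C : ℝ≥0∞) * T.mu R.envelope := by
  refine ⟨2, by norm_num, fun T R => ?_⟩
  have hcoe : ((2 : ℝ≥0) : ℝ≥0∞) = 2 := by norm_cast
  rw [hcoe]
  by_cases hdeg : R.degenerate = true
  · -- degenerate case: envelope = dilate = {root}
    have h1 : R.height = 1 := R.deg_height hdeg
    have henv : R.envelope = {R.root} := by simp [Trapezoid.envelope, hdeg]
    have hdil : R.dilate = {R.root} := by
      ext x
      simp only [Trapezoid.dilate, henv, Set.mem_setOf_eq, Set.mem_singleton_iff, h1]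
      constructor
      · rintro ⟨y, hy, h4⟩
        have hd0 : T.dist x y = 0 := by omega
        rw [(T.dist_eq_zero_iff').mp hd0, hy]
      · rintro rfl
        exact ⟨R.root, rfl, by rw [T.dist_self']; omega⟩
    rw [hdil, henv]
    exact le_mul_of_one_le_left zero_le one_le_two
  · -- non-degenerate case
    have hh1 : 1 ≤ R.height := R.height_pos
    have henv : R.envelope = ⋃ k ∈ (Finset.range (4 * R.height)).filter
        (fun k => R.height ≤ 2 * k), T.slc R.root k := by
      ext x
      simp only [Trapezoid.envelope, if_neg hdeg, Set.mem_setOf_eq, Set.mem_iUnion,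
        exists_prop, Finset.mem_filter, Finset.mem_range, HomTree.slc]
      constructor
      · rintro ⟨hb, h1, h2⟩
        have hbe : T.lev x = T.lev R.root - (T.dist x R.root : ℤ) := hb
        exact ⟨T.dist x R.root, ⟨by omega, by omega⟩, hb, rfl⟩
      · rintro ⟨k, ⟨hk4, hk2⟩, hb, hdk⟩
        have hbe : T.lev x = T.lev R.root - (T.dist x R.root : ℤ) := hb
        exact ⟨hb, by omega, by omega⟩
    have hcardK : 3 * R.height ≤ ((Finset.range (4 * R.height)).filter
        (fun k => R.height ≤ 2 * k)).card := by
      have hsub : Finset.Ico R.height (4 * R.height) ⊆ (Finset.range (4 * R.height)).filter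
          (fun k => R.height ≤ 2 * k) := by
        intro k hk
        rw [Finset.mem_Ico] at hk
        simp only [Finset.mem_filter, Finset.mem_range]
        omega
      have := Finset.card_le_card hsub
      rwa [Nat.card_Ico, show 4 * R.height - R.height = 3 * R.height by omega] at this
    have hdil_sub : R.dilate ⊆ ⋃ k ∈ Finset.range (5 * R.height + 1), T.slc R.root k := by
      intro x hx
      obtain ⟨y, hy, h4⟩ := hx
      rw [Trapezoid.envelope, if_neg hdeg] at hy
      obtain ⟨hby, hy1, hy2⟩ := hy
      have hbyr : T.lev y = T.lev R.root - (T.dist y R.root : ℤ) := hby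
      have hbx : T.below x R.root := by
        refine T.below_of_dist_lt (T.dist x y) y x hby ?_ ?_
        · omega
        · exact le_of_eq (SimpleGraph.dist_comm)
      have hbxr : T.lev x = T.lev R.root - (T.dist x R.root : ℤ) := hbx
      have hlev : T.lev y - T.lev x ≤ (T.dist x y : ℤ) := T.lev_sub_le_dist x y
      have hxk : T.dist x R.root ≤ 5 * R.height := by omega
      simp only [Set.mem_iUnion, exists_prop, Finset.mem_range, HomTree.slc]
      exact ⟨T.dist x R.root, by omega, hbx, rfl⟩
    calc T.mu R.dilate ≤ T.mu (⋃ k ∈ Finset.range (5 * R.height + 1), T.slc R.root k) :=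
          T.mu_mono hdil_sub
      _ = ((5 * R.height + 1 : ℕ) : ℝ≥0∞) * (q : ℝ≥0∞) ^ (T.lev R.root) := by
          rw [T.mu_slc_union hq R.root, Finset.card_range]
      _ ≤ ((2 * ((Finset.range (4 * R.height)).filter
            (fun k => R.height ≤ 2 * k)).card : ℕ) : ℝ≥0∞) * (q : ℝ≥0∞) ^ (T.lev R.root) := by
          refine mul_le_mul_left ?_ _
          have hn : 5 * R.height + 1 ≤ 2 * ((Finset.range (4 * R.height)).filter
              (fun k => R.height ≤ 2 * k)).card := by omega
          exact Nat.cast_le.mpr hn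
      _ = 2 * T.mu R.envelope := by
          rw [henv, T.mu_slc_union hq R.root]
          push_cast
          ring
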